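/- arXiv:1905.13659 — 2 statements merged into one kernel-verified Lean document; each statement's English description precedes it below -/
import Mathlib

section
/- Suppose the law of Y is the uniform distribution on the interval [a, b] with a < b, so that F_Y(y) = (y − a)/(b − a) for y ∈ [a, b]. Then for every bounded measurable function g : ℝ^d → ℝ, E[Y·g(X)] = (b/2)·E[g(X⁺)] + (a/2)·E[g(X⁻)]. -/
/-!
Splitting `g(X⁺)` according to which of `Y`, `Y'` is larger, Fubini and the exchangeability of the
two pairs give `E[g(X⁺)] = E[(F(Y) + F(Y-)) g(X)]`, where `F(y-) = P(Y < y)` is the left limit of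
`F`. For the uniform law both terms equal `(Y - a)/(b - a)` almost surely, so
`(b - a) E[g(X⁺)] = 2 E[(Y - a) g(X)]`. Since `g(X⁺) + g(X⁻) = g(X) + g(X')`, also
`E[g(X⁺)] + E[g(X⁻)] = 2 E[g(X)]`, and the identity is a linear combination of these two.
-/

open MeasureTheory ProbabilityTheory Set

namespace MeasureTheory.pdf.IsUniform

variable {Ω E : Type*} [MeasurableSpace Ω] [MeasurableSpace E] {μ : Measure Ω} {ρ : Measure E}

theorem ae_mem {X : Ω → E} {s : Set E} (hU : IsUniform X s μ ρ) (hs : MeasurableSet s)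
    (hns : ρ s ≠ 0) (hnt : ρ s ≠ ⊤) : ∀ᵐ ω ∂μ, X ω ∈ s :=
  ae_of_ae_map (hU.aemeasurable hns hnt) (hU ▸ ae_cond_mem hs)

theorem measureReal_preimage {X : Ω → E} {s A : Set E} (hU : IsUniform X s μ ρ) (hns : ρ s ≠ 0)
    (hnt : ρ s ≠ ⊤) (hA : MeasurableSet A) : μ.real (X ⁻¹' A) = ρ.real (s ∩ A) / ρ.real s := by
  rw [measureReal_def, hU.measure_preimage hns hnt hA, ENNReal.toReal_div]
  rfl

variable {Y : Ω → ℝ} {a b : ℝ}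

theorem measureReal_preimage_Iic (hU : IsUniform Y (Icc a b) μ) (hab : a < b) {t : ℝ}
    (ht : t ∈ Icc a b) : μ.real (Y ⁻¹' Iic t) = (t - a) / (b - a) := by
  have hset : Icc a b ∩ Iic t = Icc a t := by
    ext x
    simp only [mem_inter_iff, mem_Icc, mem_Iic]
    grind
  rw [hU.measureReal_preimage (by simp [hab]) (by simp) measurableSet_Iic, hset,
    Real.volume_real_Icc_of_le ht.1, Real.volume_real_Icc_of_le hab.le]

theorem measureReal_preimage_Iio (hU : IsUniform Y (Icc a b) μ) (hab : a < b) {t : ℝ}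
    (ht : t ∈ Icc a b) : μ.real (Y ⁻¹' Iio t) = (t - a) / (b - a) := by
  have hset : Icc a b ∩ Iio t = Ico a t := by
    ext x
    simp only [mem_inter_iff, mem_Icc, mem_Iio, mem_Ico]
    grind
  rw [hU.measureReal_preimage (by simp [hab]) (by simp) measurableSet_Iio, hset,
    Real.volume_real_Ico_of_le ht.1, Real.volume_real_Icc_of_le hab.le]

theorem integrable_mul (hU : IsUniform Y (Icc a b) μ) (hab : a < b) {h : Ω → ℝ}
    (hh : Integrable h μ) : Integrable (fun ω => Y ω * h ω) μ :=
  hh.bdd_mul (c := max |a| |b|)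
    (hU.aemeasurable (by simp [hab]) (by simp)).aestronglyMeasurable
    (by filter_upwards [hU.ae_mem measurableSet_Icc (by simp [hab]) (by simp)] with ω hω
        using abs_le_max_abs_abs hω.1 hω.2)

end MeasureTheory.pdf.IsUniform

section Comparison

variable {α β : Type*} [MeasurableSpace α] [MeasurableSpace β]

theorem integral_prod_indicator_comp_fst {μ : Measure α} {ν : Measure β} [SFinite μ]
    [IsFiniteMeasure ν] {f : α → ℝ} (hf : Integrable f μ) {S : Set (α × β)}
    (hS : MeasurableSet S) :
    ∫ z, S.indicator (fun z => f z.1) z ∂(μ.prod ν) = ∫ x, ν.real (Prod.mk x ⁻¹' S) * f x ∂μ := by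
  rw [integral_prod _ ((hf.comp_fst ν).indicator hS)]
  congr 1 with x
  have hslice : (fun y => S.indicator (fun z => f z.1) (x, y))
      = (Prod.mk x ⁻¹' S).indicator (fun _ => f x) := rfl
  rw [hslice, integral_indicator_const _ (measurable_prodMk_left hS), smul_eq_mul]

/-- The swap symmetry of `ν ⊗ ν` turns the event `z.1.2 < z.2.2` into `z.2.2 < z.1.2`; this is
why a strict and a non-strict inequality appear. -/
theorem integral_prod_ite_le (ν : Measure (α × ℝ)) [IsFiniteMeasure ν] {g : α → ℝ}
    (hg : Integrable (fun p => g p.1) ν) :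
    ∫ z, (if z.2.2 ≤ z.1.2 then g z.1.1 else g z.2.1) ∂(ν.prod ν)
      = ∫ p, ν.real {q | q.2 ≤ p.2} * g p.1 ∂ν + ∫ p, ν.real {q | q.2 < p.2} * g p.1 ∂ν := by
  set S : Set ((α × ℝ) × (α × ℝ)) := {z | z.2.2 ≤ z.1.2}
  set T : Set ((α × ℝ) × (α × ℝ)) := {z | z.2.2 < z.1.2}
  have hS : MeasurableSet S := measurableSet_le measurable_snd.snd measurable_fst.snd
  have hT : MeasurableSet T := measurableSet_lt measurable_snd.snd measurable_fst.snd
  have hsplit : (fun z : (α × ℝ) × (α × ℝ) => if z.2.2 ≤ z.1.2 then g z.1.1 else g z.2.1)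
      = fun z => S.indicator (fun z => g z.1.1) z + T.indicator (fun z => g z.1.1) z.swap := by
    ext z
    by_cases h : z.2.2 ≤ z.1.2
    · simp [S, T, h, Set.indicator]
    · simp [S, T, h, Set.indicator, lt_of_not_ge h]
  have hgT : Integrable (fun z => T.indicator (fun z => g z.1.1) z.swap) (ν.prod ν) :=
    ((hg.comp_fst ν).indicator hT).swap
  rw [hsplit, integral_add ((hg.comp_fst ν).indicator hS) hgT,
    integral_prod_swap (T.indicator fun z => g z.1.1),
    integral_prod_indicator_comp_fst hg hS, integral_prod_indicator_comp_fst hg hT]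
  rfl

variable {Ω : Type*} [MeasurableSpace Ω] {μ : Measure Ω}
  {E : Type*} [MeasurableSpace E] {X X' : Ω → E} {Y Y' : Ω → ℝ} {g : E → ℝ}

theorem integral_comp_ite_le_add_integral_comp_ite_le
    (hX : Measurable X) (hY : Measurable Y) (hX' : Measurable X') (hY' : Measurable Y')
    (hident : μ.map (fun ω => (X ω, Y ω)) = μ.map (fun ω => (X' ω, Y' ω)))
    (hg : Measurable g) (hgX : Integrable (fun ω => g (X ω)) μ) :
    ∫ ω, g (if Y' ω ≤ Y ω then X ω else X' ω) ∂μ + ∫ ω, g (if Y' ω ≤ Y ω then X' ω else X ω) ∂μ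
      = 2 * ∫ ω, g (X ω) ∂μ := by
  have hid : IdentDistrib (fun ω => g (X ω)) (fun ω => g (X' ω)) μ μ :=
    (IdentDistrib.mk (hX.prodMk hY).aemeasurable (hX'.prodMk hY').aemeasurable hident).comp
      (hg.comp measurable_fst)
  have hgX' := hid.integrable_snd hgX
  have hite {Z₁ Z₂ : Ω → E} (h₁ : Measurable Z₁) (h₂ : Measurable Z₂)
      (hg₁ : Integrable (fun ω => g (Z₁ ω)) μ) (hg₂ : Integrable (fun ω => g (Z₂ ω)) μ) :
      Integrable (fun ω => g (if Y' ω ≤ Y ω then Z₁ ω else Z₂ ω)) μ := by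
    refine (hg₁.norm.add hg₂.norm).mono'
      (hg.comp (Measurable.ite (measurableSet_le hY' hY) h₁ h₂)).aestronglyMeasurable
      (.of_forall fun ω => ?_)
    split_ifs <;> simp
  have hpair (ω : Ω) :
      g (if Y' ω ≤ Y ω then X ω else X' ω) + g (if Y' ω ≤ Y ω then X' ω else X ω)
        = g (X ω) + g (X' ω) := by
    split_ifs <;> ring
  rw [← integral_add (hite hX hX' hgX hgX') (hite hX' hX hgX' hgX)]
  simp only [hpair]
  rw [integral_add hgX hgX', ← hid.integral_eq, two_mul]

variable [IsFiniteMeasure μ]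

theorem integral_comp_pair_eq_integral_prod {Z Z' : Ω → β} (hZ : AEMeasurable Z μ)
    (hZ' : AEMeasurable Z' μ) (hindep : IndepFun Z Z' μ) (hident : μ.map Z = μ.map Z')
    {φ : β × β → ℝ} (hφ : AEStronglyMeasurable φ ((μ.map Z).prod (μ.map Z))) :
    ∫ ω, φ (Z ω, Z' ω) ∂μ = ∫ z, φ z ∂((μ.map Z).prod (μ.map Z)) := by
  have hmap : μ.map (fun ω => (Z ω, Z' ω)) = (μ.map Z).prod (μ.map Z) := by
    rw [hindep.map_prod_eq_prod_map_map hZ hZ', hident]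
  rw [← hmap] at hφ ⊢
  exact (integral_map (hZ.prodMk hZ') hφ).symm

theorem integral_comp_ite_le_eq
    (hX : Measurable X) (hY : Measurable Y) (hX' : Measurable X') (hY' : Measurable Y')
    (hindep : IndepFun (fun ω => (X ω, Y ω)) (fun ω => (X' ω, Y' ω)) μ)
    (hident : μ.map (fun ω => (X ω, Y ω)) = μ.map (fun ω => (X' ω, Y' ω)))
    (hg : Measurable g) (hgX : Integrable (fun ω => g (X ω)) μ) :
    ∫ ω, g (if Y' ω ≤ Y ω then X ω else X' ω) ∂μ
      = ∫ ω, μ.real (Y ⁻¹' Iic (Y ω)) * g (X ω) ∂μ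
        + ∫ ω, μ.real (Y ⁻¹' Iio (Y ω)) * g (X ω) ∂μ := by
  have hZ : Measurable fun ω => (X ω, Y ω) := hX.prodMk hY
  set ν := μ.map fun ω => (X ω, Y ω)
  have hgν : Integrable (fun p => g p.1) ν :=
    (integrable_map_measure (hg.comp measurable_fst).aestronglyMeasurable hZ.aemeasurable).2 hgX
  have hIic (t : ℝ) : ν.real {q | q.2 ≤ t} = μ.real (Y ⁻¹' Iic t) :=
    map_measureReal_apply hZ (measurable_snd measurableSet_Iic)
  have hIio (t : ℝ) : ν.real {q | q.2 < t} = μ.real (Y ⁻¹' Iio t) :=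
    map_measureReal_apply hZ (measurable_snd measurableSet_Iio)
  have hF : Monotone fun t => μ.real (Y ⁻¹' Iic t) := fun s t hst =>
    measureReal_mono (preimage_mono (Iic_subset_Iic.2 hst))
  have hF' : Monotone fun t => μ.real (Y ⁻¹' Iio t) := fun s t hst =>
    measureReal_mono (preimage_mono (Iio_subset_Iio hst))
  calc ∫ ω, g (if Y' ω ≤ Y ω then X ω else X' ω) ∂μ
      = ∫ ω, (fun z : (E × ℝ) × (E × ℝ) => if z.2.2 ≤ z.1.2 then g z.1.1 else g z.2.1)
          ((X ω, Y ω), (X' ω, Y' ω)) ∂μ := by simp only [apply_ite g]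
    _ = ∫ z, (if z.2.2 ≤ z.1.2 then g z.1.1 else g z.2.1) ∂(ν.prod ν) :=
      integral_comp_pair_eq_integral_prod hZ.aemeasurable (hX'.prodMk hY').aemeasurable hindep
        hident (Measurable.ite (measurableSet_le measurable_snd.snd measurable_fst.snd)
          (hg.comp measurable_fst.fst) (hg.comp measurable_snd.fst)).aestronglyMeasurable
    _ = ∫ p, ν.real {q | q.2 ≤ p.2} * g p.1 ∂ν + ∫ p, ν.real {q | q.2 < p.2} * g p.1 ∂ν :=
      integral_prod_ite_le ν hgν
    _ = _ := by
      simp only [hIic, hIio]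
      rw [integral_map (f := fun p => μ.real (Y ⁻¹' Iic p.2) * g p.1) hZ.aemeasurable
          ((hF.measurable.comp measurable_snd).mul (hg.comp measurable_fst)).aestronglyMeasurable,
        integral_map (f := fun p => μ.real (Y ⁻¹' Iio p.2) * g p.1) hZ.aemeasurable
          ((hF'.measurable.comp measurable_snd).mul (hg.comp measurable_fst)).aestronglyMeasurable]

theorem integral_comp_ite_le_of_isUniform
    (hX : Measurable X) (hY : Measurable Y) (hX' : Measurable X') (hY' : Measurable Y')
    (hindep : IndepFun (fun ω => (X ω, Y ω)) (fun ω => (X' ω, Y' ω)) μ)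
    (hident : μ.map (fun ω => (X ω, Y ω)) = μ.map (fun ω => (X' ω, Y' ω)))
    (hg : Measurable g) (hgX : Integrable (fun ω => g (X ω)) μ) {a b : ℝ}
    (hab : a < b) (hU : pdf.IsUniform Y (Icc a b) μ) :
    (b - a) * ∫ ω, g (if Y' ω ≤ Y ω then X ω else X' ω) ∂μ
      = 2 * ∫ ω, (Y ω - a) * g (X ω) ∂μ := by
  have hYab := hU.ae_mem measurableSet_Icc (by simp [hab]) (by simp)
  have hIic : (fun ω => μ.real (Y ⁻¹' Iic (Y ω)) * g (X ω))
      =ᵐ[μ] fun ω => (Y ω - a) / (b - a) * g (X ω) := by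
    filter_upwards [hYab] with ω hω
    rw [hU.measureReal_preimage_Iic hab hω]
  have hIio : (fun ω => μ.real (Y ⁻¹' Iio (Y ω)) * g (X ω))
      =ᵐ[μ] fun ω => (Y ω - a) / (b - a) * g (X ω) := by
    filter_upwards [hYab] with ω hω
    rw [hU.measureReal_preimage_Iio hab hω]
  rw [integral_comp_ite_le_eq hX hY hX' hY' hindep hident hg hgX, integral_congr_ae hIic,
    integral_congr_ae hIio, ← two_mul, mul_left_comm, ← integral_const_mul]
  congr 2 with ω
  field_simp [(sub_pos.2 hab).ne']

end Comparison

/-- If the law of `Y` is uniform on `[a, b]` with `a < b`, then for every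
bounded measurable `g`, `E[Y g(X)] = (b/2) E[g(X⁺)] + (a/2) E[g(X⁻)]`. -/
theorem stmt_4
    {Ω : Type*} [MeasurableSpace Ω] {μ : Measure Ω} [IsProbabilityMeasure μ]
    {d : ℕ} {X X' : Ω → (Fin d → ℝ)} {Y Y' : Ω → ℝ}
    (hX : Measurable X) (hY : Measurable Y) (hX' : Measurable X') (hY' : Measurable Y')
    (hindep : IndepFun (fun ω => (X ω, Y ω)) (fun ω => (X' ω, Y' ω)) μ)
    (hident : μ.map (fun ω => (X ω, Y ω)) = μ.map (fun ω => (X' ω, Y' ω)))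
    (a b : ℝ) (hab : a < b)
    (hlaw : μ.map Y = (ENNReal.ofReal (b - a))⁻¹ • (volume.restrict (Set.Icc a b)))
    (g : (Fin d → ℝ) → ℝ) (hg : Measurable g)
    (M : ℝ) (hgM : ∀ x, |g x| ≤ M) :
    ∫ ω, Y ω * g (X ω) ∂μ
      = (b / 2) * (∫ ω, g (if Y' ω ≤ Y ω then X ω else X' ω) ∂μ)
        + (a / 2) * ∫ ω, g (if Y' ω ≤ Y ω then X' ω else X ω) ∂μ := by
  have hU : pdf.IsUniform Y (Icc a b) μ := by
    rwa [pdf.IsUniform, ProbabilityTheory.cond, Real.volume_Icc]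
  have hgX : Integrable (fun ω => g (X ω)) μ :=
    .of_bound (hg.comp hX).aestronglyMeasurable M (.of_forall fun ω => hgM (X ω))
  have hplus := integral_comp_ite_le_of_isUniform hX hY hX' hY' hindep hident hg hgX hab hU
  have hsum := integral_comp_ite_le_add_integral_comp_ite_le hX hY hX' hY' hident hg hgX
  have hcentre : ∫ ω, (Y ω - a) * g (X ω) ∂μ = ∫ ω, Y ω * g (X ω) ∂μ - a * ∫ ω, g (X ω) ∂μ := by
    simp only [sub_mul]
    rw [integral_sub (hU.integrable_mul hab hgX) (hgX.const_mul a), integral_const_mul]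
  linear_combination (-1 / 2) * hplus - (a / 2) * hsum - hcentre
end

section
/- Let g : ℝ^d → ℝ be measurable with |g(x)| ≤ M for all x ∈ ℝ^d, and let w₁, w₂ ∈ ℝ. Then |E[Y·g(X)] − w₁·E[g(X⁺)] − w₂·E[g(X⁻)]| ≤ M·Err(w₁, w₂). Consequently, for every measurable h : ℝ^d → ℝ with |φ'(h(x))| ≤ M for all x, and every λ ∈ ℝ, |R(h) − R_linear(h; λ, w₁, w₂)| ≤ M·Err(w₁, w₂). -/
/-! Conditionally on `(X, Y)`, the event `Y' ≤ Y` has probability `F_Y(Y)`; swapping the two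
copies and using that `Y` has no atoms, the event `Y < Y'` contributes the same amount, so
`E[g(X⁺)] = 2 E[F_Y(Y) g(X)]`. Since `(X⁺, X⁻)` is a permutation of `(X, X')`,
`E[g(X⁺)] + E[g(X⁻)] = 2 E[g(X)]`. Together these turn the left side of the first bound into
`E[(Y - 2w₁F_Y(Y) - 2w₂(1 - F_Y(Y))) g(X)]`, which is at most `M · Err(w₁, w₂)`.
Expanding the Bregman divergence, `R(h) - R_linear(h)` is minus the same expression for
`g = φ' ∘ h`: the `λ`-terms cancel by the sum identity. -/

open MeasureTheory ProbabilityTheory Set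

theorem integral_indicator_comp_fst_prod {α β : Type*} [MeasurableSpace α] [MeasurableSpace β]
    {ν : Measure α} {ρ : Measure β} [SFinite ν] [IsFiniteMeasure ρ] {s : Set (α × β)}
    (hs : MeasurableSet s) {g : α → ℝ} (hg : Integrable g ν) :
    ∫ p, s.indicator (fun p => g p.1) p ∂(ν.prod ρ)
      = ∫ a, ρ.real (Prod.mk a ⁻¹' s) * g a ∂ν := by
  rw [integral_prod _ ((hg.comp_fst ρ).indicator hs)]
  refine integral_congr_ae (Filter.Eventually.of_forall fun a => ?_)
  simp only [← indicator_comp_right (Prod.mk a) (s := s) (g := fun p : α × β => g p.1)]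
  exact integral_indicator_const (g a) (measurable_prodMk_left hs)

theorem abs_integral_mul_le_of_abs_le {Ω : Type*} [MeasurableSpace Ω] {μ : Measure Ω}
    {f g : Ω → ℝ} {M : ℝ} (hf : Integrable f μ) (hg : AEStronglyMeasurable g μ)
    (hgM : ∀ ω, |g ω| ≤ M) :
    |∫ ω, f ω * g ω ∂μ| ≤ M * ∫ ω, |f ω| ∂μ := by
  have hfg : Integrable (fun ω => f ω * g ω) μ :=
    hf.mul_bdd hg (Filter.Eventually.of_forall fun ω => hgM ω)
  calc |∫ ω, f ω * g ω ∂μ| ≤ ∫ ω, |f ω * g ω| ∂μ := by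
        simpa only [Real.norm_eq_abs] using norm_integral_le_integral_norm (fun ω => f ω * g ω)
    _ ≤ ∫ ω, M * |f ω| ∂μ :=
        integral_mono hfg.abs (hf.abs.const_mul M) fun ω => by
          rw [abs_mul, mul_comm]; exact mul_le_mul_of_nonneg_right (hgM ω) (abs_nonneg _)
    _ = M * ∫ ω, |f ω| ∂μ := integral_const_mul M _

namespace PairwiseComparison

variable {α : Type*}

/-- `X⁺` of the pair `((X, Y), (X', Y'))`; ties `Y = Y'` go to the first copy. -/
noncomputable def upper (p : (α × ℝ) × (α × ℝ)) : α :=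
  if p.2.2 ≤ p.1.2 then p.1.1 else p.2.1

noncomputable def lower (p : (α × ℝ) × (α × ℝ)) : α :=
  if p.2.2 ≤ p.1.2 then p.2.1 else p.1.1

lemma comp_upper_eq_indicator_add (g : α → ℝ) (p : (α × ℝ) × (α × ℝ)) :
    g (upper p) = {p : (α × ℝ) × (α × ℝ) | p.2.2 ≤ p.1.2}.indicator (fun p => g p.1.1) p
      + {p : (α × ℝ) × (α × ℝ) | p.1.2 < p.2.2}.indicator (fun p => g p.2.1) p := by
  by_cases h : p.2.2 ≤ p.1.2 <;> simp [upper, h, not_le.mp]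

lemma comp_upper_add_comp_lower (g : α → ℝ) (p : (α × ℝ) × (α × ℝ)) :
    g (upper p) + g (lower p) = g p.1.1 + g p.2.1 := by
  unfold upper lower; split_ifs <;> ring

variable [MeasurableSpace α]

@[fun_prop]
lemma measurable_upper : Measurable (upper : (α × ℝ) × (α × ℝ) → α) :=
  Measurable.ite (measurableSet_le (by fun_prop) (by fun_prop)) (by fun_prop) (by fun_prop)

@[fun_prop]
lemma measurable_lower : Measurable (lower : (α × ℝ) × (α × ℝ) → α) :=
  Measurable.ite (measurableSet_le (by fun_prop) (by fun_prop)) (by fun_prop) (by fun_prop)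

variable (ν : Measure (α × ℝ)) [IsProbabilityMeasure ν] {g : α → ℝ}

lemma cdf_map_snd_eq_measureReal_le (t : ℝ) :
    cdf (ν.map Prod.snd) t = ν.real {q | q.2 ≤ t} := by
  have := Measure.isProbabilityMeasure_map (μ := ν) measurable_snd.aemeasurable
  rw [cdf_eq_real, map_measureReal_apply measurable_snd measurableSet_Iic]; rfl

lemma cdf_map_snd_eq_measureReal_lt [NullSingletonClass (ν.map Prod.snd)] (t : ℝ) :
    cdf (ν.map Prod.snd) t = ν.real {q | q.2 < t} := by
  have := Measure.isProbabilityMeasure_map (μ := ν) measurable_snd.aemeasurable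
  rw [cdf_eq_real, ← measureReal_congr Iio_ae_eq_Iic,
    map_measureReal_apply measurable_snd measurableSet_Iio]; rfl

variable {ν}

lemma integrable_comp_upper (hg : Integrable (fun q => g q.1) ν) :
    Integrable (fun p => g (upper p)) (ν.prod ν) := by
  simp only [comp_upper_eq_indicator_add]
  exact ((hg.comp_fst ν).indicator (measurableSet_le (by fun_prop) (by fun_prop))).add
    ((hg.comp_snd ν).indicator (measurableSet_lt (by fun_prop) (by fun_prop)))

lemma integrable_comp_lower (hg : Integrable (fun q => g q.1) ν) :
    Integrable (fun p => g (lower p)) (ν.prod ν) := by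
  have h := (integrable_comp_upper hg).neg.add ((hg.comp_fst ν).add (hg.comp_snd ν))
  refine h.congr (Filter.Eventually.of_forall fun p => ?_)
  simp only [Pi.add_apply, Pi.neg_apply]
  linarith [comp_upper_add_comp_lower g p]

lemma integral_comp_upper [NullSingletonClass (ν.map Prod.snd)]
    (hg : Integrable (fun q => g q.1) ν) :
    ∫ p, g (upper p) ∂(ν.prod ν) = 2 * ∫ q, cdf (ν.map Prod.snd) q.2 * g q.1 ∂ν := by
  have hle : MeasurableSet {p : (α × ℝ) × (α × ℝ) | p.2.2 ≤ p.1.2} :=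
    measurableSet_le (by fun_prop) (by fun_prop)
  have hlt : MeasurableSet {p : (α × ℝ) × (α × ℝ) | p.2.2 < p.1.2} :=
    measurableSet_lt (by fun_prop) (by fun_prop)
  have hlt' : MeasurableSet {p : (α × ℝ) × (α × ℝ) | p.1.2 < p.2.2} :=
    measurableSet_lt (by fun_prop) (by fun_prop)
  simp only [comp_upper_eq_indicator_add]
  rw [integral_add ((hg.comp_fst ν).indicator hle) ((hg.comp_snd ν).indicator hlt')]
  have hswap :
      ∫ p, {p : (α × ℝ) × (α × ℝ) | p.1.2 < p.2.2}.indicator (fun p => g p.2.1) p ∂(ν.prod ν)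
        = ∫ p, {p : (α × ℝ) × (α × ℝ) | p.2.2 < p.1.2}.indicator (fun p => g p.1.1) p
            ∂(ν.prod ν) := by
    rw [← integral_prod_swap]; rfl
  rw [hswap, integral_indicator_comp_fst_prod hle hg, integral_indicator_comp_fst_prod hlt hg,
    two_mul]
  congr 1 <;> refine integral_congr_ae (Filter.Eventually.of_forall fun q => ?_)
  · simp only [cdf_map_snd_eq_measureReal_le]; rfl
  · simp only [cdf_map_snd_eq_measureReal_lt]; rfl

lemma integral_comp_upper_add_integral_comp_lower (hg : Integrable (fun q => g q.1) ν) :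
    ∫ p, g (upper p) ∂(ν.prod ν) + ∫ p, g (lower p) ∂(ν.prod ν) = 2 * ∫ q, g q.1 ∂ν := by
  rw [← integral_add (integrable_comp_upper hg) (integrable_comp_lower hg)]
  simp only [comp_upper_add_comp_lower]
  rw [integral_add (hg.comp_fst ν) (hg.comp_snd ν), integral_fun_fst (fun q : α × ℝ => g q.1),
    integral_fun_snd (fun q : α × ℝ => g q.1)]
  simp [two_mul]

end PairwiseComparison

section IidPair

open PairwiseComparison

variable {Ω α : Type*} [MeasurableSpace Ω] [MeasurableSpace α] {μ : Measure Ω}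

lemma map_snd_map_prodMk {X : Ω → α} {Y : Ω → ℝ} (hX : Measurable X) (hY : Measurable Y) :
    (μ.map fun ω => (X ω, Y ω)).map Prod.snd = μ.map Y := by
  rw [Measure.map_map measurable_snd (hX.prodMk hY)]; rfl

variable [IsProbabilityMeasure μ]

lemma cdf_map_apply {Y : Ω → ℝ} (hY : Measurable Y) (t : ℝ) :
    cdf (μ.map Y) t = μ.real {ω | Y ω ≤ t} := by
  have : IsProbabilityMeasure (μ.map Y) := Measure.isProbabilityMeasure_map hY.aemeasurable
  rw [cdf_eq_real, map_measureReal_apply hY measurableSet_Iic]; rfl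

lemma integral_comp_prodMk_of_indepFun {β : Type*} [MeasurableSpace β] {Z Z' : Ω → β}
    (hZ : AEMeasurable Z μ) (hZ' : AEMeasurable Z' μ) (hindep : IndepFun Z Z' μ)
    (hident : μ.map Z = μ.map Z') {f : β × β → ℝ}
    (hf : AEStronglyMeasurable f ((μ.map Z).prod (μ.map Z))) :
    ∫ ω, f (Z ω, Z' ω) ∂μ = ∫ p, f p ∂((μ.map Z).prod (μ.map Z)) := by
  have hjoint := hindep.map_prod_eq_prod_map_map hZ hZ'
  rw [← hident] at hjoint
  rw [← integral_map (hZ.prodMk hZ') (by rwa [hjoint]), hjoint]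

variable {X X' : Ω → α} {Y Y' : Ω → ℝ} {g : α → ℝ}

lemma integral_comp_ite_le_of_iid (hX : Measurable X) (hY : Measurable Y)
    (hX' : Measurable X') (hY' : Measurable Y')
    (hindep : IndepFun (fun ω => (X ω, Y ω)) (fun ω => (X' ω, Y' ω)) μ)
    (hident : μ.map (fun ω => (X ω, Y ω)) = μ.map (fun ω => (X' ω, Y' ω)))
    [NullSingletonClass (μ.map Y)] (hg : Measurable g) (hgX : Integrable (fun ω => g (X ω)) μ) :
    ∫ ω, g (if Y' ω ≤ Y ω then X ω else X' ω) ∂μ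
      = 2 * ∫ ω, μ.real {ω' | Y ω' ≤ Y ω} * g (X ω) ∂μ := by
  have hXY : Measurable fun ω => (X ω, Y ω) := hX.prodMk hY
  set ν := μ.map fun ω => (X ω, Y ω)
  have : IsProbabilityMeasure ν := Measure.isProbabilityMeasure_map hXY.aemeasurable
  have : NullSingletonClass (ν.map Prod.snd) := by
    rw [map_snd_map_prodMk hX hY]; infer_instance
  have hgν : Integrable (fun q : α × ℝ => g q.1) ν :=
    (integrable_map_measure (hg.comp measurable_fst).aestronglyMeasurable
      hXY.aemeasurable).mpr hgX
  calc ∫ ω, g (if Y' ω ≤ Y ω then X ω else X' ω) ∂μ = ∫ p, g (upper p) ∂(ν.prod ν) :=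
        integral_comp_prodMk_of_indepFun hXY.aemeasurable (hX'.prodMk hY').aemeasurable
          hindep hident (f := fun p => g (upper p))
          (hg.comp measurable_upper).aestronglyMeasurable
    _ = 2 * ∫ q, cdf (ν.map Prod.snd) q.2 * g q.1 ∂ν := integral_comp_upper hgν
    _ = 2 * ∫ ω, μ.real {ω' | Y ω' ≤ Y ω} * g (X ω) ∂μ := by
        rw [map_snd_map_prodMk hX hY, integral_map (f := fun q => cdf (μ.map Y) q.2 * g q.1)
          hXY.aemeasurable ((((cdf _).mono.measurable.comp measurable_snd).mul
            (hg.comp measurable_fst)).aestronglyMeasurable)]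
        simp only [cdf_map_apply hY]

lemma integral_comp_ite_le_add_integral_comp_ite_le_of_iid (hX : Measurable X)
    (hY : Measurable Y) (hX' : Measurable X') (hY' : Measurable Y')
    (hindep : IndepFun (fun ω => (X ω, Y ω)) (fun ω => (X' ω, Y' ω)) μ)
    (hident : μ.map (fun ω => (X ω, Y ω)) = μ.map (fun ω => (X' ω, Y' ω)))
    (hg : Measurable g) (hgX : Integrable (fun ω => g (X ω)) μ) :
    ∫ ω, g (if Y' ω ≤ Y ω then X ω else X' ω) ∂μ
        + ∫ ω, g (if Y' ω ≤ Y ω then X' ω else X ω) ∂μ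
      = 2 * ∫ ω, g (X ω) ∂μ := by
  have hXY : Measurable fun ω => (X ω, Y ω) := hX.prodMk hY
  set ν := μ.map fun ω => (X ω, Y ω)
  have : IsProbabilityMeasure ν := Measure.isProbabilityMeasure_map hXY.aemeasurable
  have hgν : Integrable (fun q : α × ℝ => g q.1) ν :=
    (integrable_map_measure (hg.comp measurable_fst).aestronglyMeasurable
      hXY.aemeasurable).mpr hgX
  have htransfer := fun f : (α × ℝ) × (α × ℝ) → α => fun hf : Measurable f =>
    integral_comp_prodMk_of_indepFun hXY.aemeasurable (hX'.prodMk hY').aemeasurable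
      hindep hident (f := fun p => g (f p)) (hg.comp hf).aestronglyMeasurable
  calc _ = ∫ p, g (upper p) ∂(ν.prod ν) + ∫ p, g (lower p) ∂(ν.prod ν) :=
        congrArg₂ (· + ·) (htransfer upper measurable_upper) (htransfer lower measurable_lower)
    _ = 2 * ∫ q, g q.1 ∂ν := integral_comp_upper_add_integral_comp_lower hgν
    _ = 2 * ∫ ω, g (X ω) ∂μ := by
        rw [integral_map (f := fun q => g q.1) hXY.aemeasurable
          (hg.comp measurable_fst).aestronglyMeasurable]

theorem abs_integral_mul_sub_pairwise_le (hX : Measurable X) (hY : Measurable Y)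
    (hX' : Measurable X') (hY' : Measurable Y')
    (hindep : IndepFun (fun ω => (X ω, Y ω)) (fun ω => (X' ω, Y' ω)) μ)
    (hident : μ.map (fun ω => (X ω, Y ω)) = μ.map (fun ω => (X' ω, Y' ω)))
    [NullSingletonClass (μ.map Y)] (hYint : Integrable Y μ) (w1 w2 : ℝ) {M : ℝ}
    (hg : Measurable g) (hgM : ∀ x, |g x| ≤ M) :
    |(∫ ω, Y ω * g (X ω) ∂μ)
        - w1 * (∫ ω, g (if Y' ω ≤ Y ω then X ω else X' ω) ∂μ)
        - w2 * ∫ ω, g (if Y' ω ≤ Y ω then X' ω else X ω) ∂μ|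
      ≤ M * ∫ ω, |Y ω - 2 * w1 * μ.real {ω' | Y ω' ≤ Y ω}
          - 2 * w2 * (1 - μ.real {ω' | Y ω' ≤ Y ω})| ∂μ := by
  set F := fun ω => μ.real {ω' | Y ω' ≤ Y ω}
  have hF : Measurable F := by
    have hcdf : (fun ω => cdf (μ.map Y) (Y ω)) = F := funext fun ω => cdf_map_apply hY (Y ω)
    exact hcdf ▸ (cdf (μ.map Y)).mono.measurable.comp hY
  have hF1 : ∀ ω, |F ω| ≤ 1 := fun ω => by
    rw [abs_of_nonneg measureReal_nonneg]; exact measureReal_le_one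
  have hFint : Integrable F μ := .of_bound hF.aestronglyMeasurable 1 (ae_of_all _ hF1)
  have hgX : Integrable (fun ω => g (X ω)) μ :=
    .of_bound (hg.comp hX).aestronglyMeasurable M (ae_of_all _ fun ω => hgM (X ω))
  have hYg : Integrable (fun ω => Y ω * g (X ω)) μ :=
    hYint.mul_bdd (hg.comp hX).aestronglyMeasurable (ae_of_all _ fun ω => hgM (X ω))
  have hFg : Integrable (fun ω => F ω * g (X ω)) μ :=
    hFint.mul_bdd (hg.comp hX).aestronglyMeasurable (ae_of_all _ fun ω => hgM (X ω))
  have hplus := integral_comp_ite_le_of_iid hX hY hX' hY' hindep hident hg hgX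
  have hsum := integral_comp_ite_le_add_integral_comp_ite_le_of_iid hX hY hX' hY' hindep hident
    hg hgX
  have hlinear : (∫ ω, Y ω * g (X ω) ∂μ)
        - w1 * (∫ ω, g (if Y' ω ≤ Y ω then X ω else X' ω) ∂μ)
        - w2 * ∫ ω, g (if Y' ω ≤ Y ω then X' ω else X ω) ∂μ
      = ∫ ω, (Y ω - 2 * w1 * F ω - 2 * w2 * (1 - F ω)) * g (X ω) ∂μ := by
    have hexpand : (fun ω => (Y ω - 2 * w1 * F ω - 2 * w2 * (1 - F ω)) * g (X ω))
        = fun ω => Y ω * g (X ω) + (2 * w2 - 2 * w1) * (F ω * g (X ω)) - 2 * w2 * g (X ω) := by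
      ext ω; ring
    rw [hexpand, integral_sub, integral_add, integral_const_mul, integral_const_mul]
    · linear_combination (-w2) * hsum + (w2 - w1) * hplus
    exacts [hYg, hFg.const_mul _, hYg.add (hFg.const_mul _), hgX.const_mul _]
  rw [hlinear]
  exact abs_integral_mul_le_of_abs_le
    ((hYint.sub (hFint.const_mul _)).sub ((integrable_const 1).sub hFint |>.const_mul _))
    (hg.comp hX).aestronglyMeasurable fun ω => hgM (X ω)

end IidPair

theorem integral_bregman_sub_linearized_eq {Ω : Type*} [MeasurableSpace Ω] {μ : Measure Ω}
    {a b y u v : Ω → ℝ} (ha : Integrable a μ) (hb : Integrable b μ)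
    (hyv : Integrable (fun ω => y ω * v ω) μ) (huv : Integrable (fun ω => u ω * v ω) μ)
    (hv : Integrable v μ) {lam w1 w2 A B : ℝ} (hAB : A + B = 2 * ∫ ω, v ω ∂μ) :
    (∫ ω, (a ω - b ω - (y ω - u ω) * v ω) ∂μ)
        - ((∫ ω, a ω ∂μ) - (∫ ω, (b ω - (u ω - lam) * v ω) ∂μ)
          - (w1 - lam / 2) * A - (w2 - lam / 2) * B)
      = -((∫ ω, y ω * v ω ∂μ) - w1 * A - w2 * B) := by
  have hrisk : (fun ω => a ω - b ω - (y ω - u ω) * v ω)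
      = fun ω => a ω - b ω - (y ω * v ω - u ω * v ω) := by ext ω; ring
  have hlin : (fun ω => b ω - (u ω - lam) * v ω)
      = fun ω => b ω - (u ω * v ω - lam * v ω) := by ext ω; ring
  rw [hrisk, hlin, integral_sub, integral_sub ha hb, integral_sub hyv huv, integral_sub hb,
    integral_sub huv (hv.const_mul lam), integral_const_mul]
  · linear_combination (-lam / 2) * hAB
  exacts [huv.sub (hv.const_mul lam), ha.sub hb, hyv.sub huv]

theorem stmt_6_general
    {Ω : Type*} [MeasurableSpace Ω] {μ : Measure Ω} [IsProbabilityMeasure μ]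
    {d : ℕ} {X X' : Ω → (Fin d → ℝ)} {Y Y' : Ω → ℝ}
    (hX : Measurable X) (hY : Measurable Y) (hX' : Measurable X') (hY' : Measurable Y')
    (hindep : IndepFun (fun ω => (X ω, Y ω)) (fun ω => (X' ω, Y' ω)) μ)
    (hident : μ.map (fun ω => (X ω, Y ω)) = μ.map (fun ω => (X' ω, Y' ω)))
    (hatomless : ∀ t : ℝ, μ {ω | Y ω = t} = 0)
    (hYint : Integrable Y μ)
    (φ : ℝ → ℝ)
    (w1 w2 M : ℝ) :
    (∀ g : (Fin d → ℝ) → ℝ, Measurable g → (∀ x, |g x| ≤ M) →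
      |(∫ ω, Y ω * g (X ω) ∂μ)
          - w1 * (∫ ω, g (if Y' ω ≤ Y ω then X ω else X' ω) ∂μ)
          - w2 * ∫ ω, g (if Y' ω ≤ Y ω then X' ω else X ω) ∂μ|
        ≤ M * ∫ ω, |Y ω - 2 * w1 * (μ {ω' | Y ω' ≤ Y ω}).toReal
            - 2 * w2 * (1 - (μ {ω' | Y ω' ≤ Y ω}).toReal)| ∂μ) ∧
    (∀ h : (Fin d → ℝ) → ℝ, Measurable h → (∀ x, |deriv φ (h x)| ≤ M) →
      Integrable (fun ω => φ (Y ω)) μ →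
      Integrable (fun ω => φ (h (X ω))) μ →
      Integrable (fun ω => h (X ω) * deriv φ (h (X ω))) μ →
      ∀ lam : ℝ,
      |(∫ ω, (φ (Y ω) - φ (h (X ω)) - (Y ω - h (X ω)) * deriv φ (h (X ω))) ∂μ)
          - ((∫ ω, φ (Y ω) ∂μ)
              - (∫ ω, (φ (h (X ω)) - (h (X ω) - lam) * deriv φ (h (X ω))) ∂μ)
              - (w1 - lam / 2) * (∫ ω, deriv φ (h (if Y' ω ≤ Y ω then X ω else X' ω)) ∂μ)
              - (w2 - lam / 2) * ∫ ω, deriv φ (h (if Y' ω ≤ Y ω then X' ω else X ω)) ∂μ)|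
        ≤ M * ∫ ω, |Y ω - 2 * w1 * (μ {ω' | Y ω' ≤ Y ω}).toReal
            - 2 * w2 * (1 - (μ {ω' | Y ω' ≤ Y ω}).toReal)| ∂μ) := by
  have : NullSingletonClass (μ.map Y) :=
    ⟨fun t => by rw [Measure.map_apply hY (measurableSet_singleton t)]; exact hatomless t⟩
  have hbound := fun g (hg : Measurable g) (hgM : ∀ x, |g x| ≤ M) =>
    abs_integral_mul_sub_pairwise_le hX hY hX' hY' hindep hident hYint w1 w2 hg hgM
  refine ⟨hbound, fun h hh hM hφY hφhX hhX lam => ?_⟩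
  have hg : Measurable fun x => deriv φ (h x) := (measurable_deriv φ).comp hh
  have hgX : Integrable (fun ω => deriv φ (h (X ω))) μ :=
    .of_bound (hg.comp hX).aestronglyMeasurable M (ae_of_all _ fun ω => hM (X ω))
  have hsum :=
    integral_comp_ite_le_add_integral_comp_ite_le_of_iid hX hY hX' hY' hindep hident hg hgX
  rw [integral_bregman_sub_linearized_eq hφY hφhX
    (hYint.mul_bdd hgX.aestronglyMeasurable (ae_of_all _ fun ω => hM (X ω))) hhX hgX hsum,
    abs_neg]
  exact hbound _ hg hM

/-- (i) For measurable `g` bounded by `M` and any weights `w₁, w₂`,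
`|E[Y g(X)] - w₁ E[g(X⁺)] - w₂ E[g(X⁻)]| ≤ M · Err(w₁, w₂)`, and (ii) consequently for
every measurable `h` with `|φ'(h(x))| ≤ M` and every `λ`,
`|R(h) - R_linear(h; λ, w₁, w₂)| ≤ M · Err(w₁, w₂)`, where
`Err(w₁,w₂) = E[|Y - 2w₁ F_Y(Y) - 2w₂ (1 - F_Y(Y))|]`. -/
theorem stmt_6
    {Ω : Type*} [MeasurableSpace Ω] {μ : Measure Ω} [IsProbabilityMeasure μ]
    {d : ℕ} {X X' : Ω → (Fin d → ℝ)} {Y Y' : Ω → ℝ}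
    (hX : Measurable X) (hY : Measurable Y) (hX' : Measurable X') (hY' : Measurable Y')
    (hindep : IndepFun (fun ω => (X ω, Y ω)) (fun ω => (X' ω, Y' ω)) μ)
    (hident : μ.map (fun ω => (X ω, Y ω)) = μ.map (fun ω => (X' ω, Y' ω)))
    (hatomless : ∀ t : ℝ, μ {ω | Y ω = t} = 0)
    (hYint : Integrable Y μ)
    (φ : ℝ → ℝ) (hφdiff : Differentiable ℝ φ) (hφconv : ConvexOn ℝ Set.univ φ)
    (w1 w2 M : ℝ) :
    (∀ g : (Fin d → ℝ) → ℝ, Measurable g → (∀ x, |g x| ≤ M) →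
      |(∫ ω, Y ω * g (X ω) ∂μ)
          - w1 * (∫ ω, g (if Y' ω ≤ Y ω then X ω else X' ω) ∂μ)
          - w2 * ∫ ω, g (if Y' ω ≤ Y ω then X' ω else X ω) ∂μ|
        ≤ M * ∫ ω, |Y ω - 2 * w1 * (μ {ω' | Y ω' ≤ Y ω}).toReal
            - 2 * w2 * (1 - (μ {ω' | Y ω' ≤ Y ω}).toReal)| ∂μ) ∧
    (∀ h : (Fin d → ℝ) → ℝ, Measurable h → (∀ x, |deriv φ (h x)| ≤ M) →
      Integrable (fun ω => φ (Y ω)) μ →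
      Integrable (fun ω => φ (h (X ω))) μ →
      Integrable (fun ω => h (X ω) * deriv φ (h (X ω))) μ →
      ∀ lam : ℝ,
      |(∫ ω, (φ (Y ω) - φ (h (X ω)) - (Y ω - h (X ω)) * deriv φ (h (X ω))) ∂μ)
          - ((∫ ω, φ (Y ω) ∂μ)
              - (∫ ω, (φ (h (X ω)) - (h (X ω) - lam) * deriv φ (h (X ω))) ∂μ)
              - (w1 - lam / 2) * (∫ ω, deriv φ (h (if Y' ω ≤ Y ω then X ω else X' ω)) ∂μ)
              - (w2 - lam / 2) * ∫ ω, deriv φ (h (if Y' ω ≤ Y ω then X' ω else X ω)) ∂μ)|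
        ≤ M * ∫ ω, |Y ω - 2 * w1 * (μ {ω' | Y ω' ≤ Y ω}).toReal
            - 2 * w2 * (1 - (μ {ω' | Y ω' ≤ Y ω}).toReal)| ∂μ) :=
  stmt_6_general hX hY hX' hY' hindep hident hatomless hYint φ w1 w2 M
end
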